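/- For all integers n ≥ 1, q ≥ 2, and M ≥ 1 satisfying (M+1)² ≤ 2 · q^{2^n − n − 1} · e^{−(n−1)/(q−1)}, there exists a q-ary word of length M that avoids the n-th Zimin word Z_n; consequently f(n,q) ≥ √(2 q^{2^n} / (q^{n+1} e^{(n−1)/(q−1)})) − 1. -/

import Mathlib

open Filter

/-- `U` is an instance of `V`: image of `V` under a nonerasing substitution. -/
def IsInstance {Γ β : Type*} (V : List Γ) (U : List β) : Prop :=
  ∃ φ : Γ → List β, (∀ x ∈ V, φ x ≠ []) ∧ U = (V.map φ).flatten

/-- `W` encounters `V`: some factor of `W` is an instance of `V`. -/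
def Encounters {Γ β : Type*} (V : List Γ) (W : List β) : Prop :=
  ∃ U : List β, U <:+: W ∧ IsInstance V U

/-- Zimin words over alphabet ℕ. -/
def Zimin : ℕ → List ℕ
  | 0 => []
  | n + 1 => Zimin n ++ [n] ++ Zimin n

/-- Least M such that every q-ary word of length M encounters Z_n. -/
noncomputable def fZ (n q : ℕ) : ℕ :=
  sInf {M | ∀ W : List (Fin q), W.length = M → Encounters (Zimin n) W}

/-- Exponential tower with b copies of a. -/
def tower (a : ℕ) : ℕ → ℕ
  | 0 => 1
  | b + 1 => a ^ tower a b

/-- Number of length-M q-ary words that are instances of V. -/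
noncomputable def instCount (V : List ℕ) (q M : ℕ) : ℕ :=
  Nat.card {W : Fin M → Fin q // IsInstance V (List.ofFn W)}

/-- Factor density d(V,W). -/
noncomputable def factorDensity {α : Type*} [DecidableEq α] (V W : List α) : ℝ :=
  (((((Finset.range (W.length + 1)) ×ˢ (Finset.range (W.length + 1))).filter
      (fun p => p.1 < p.2 ∧ (W.drop p.1).take (p.2 - p.1) = V)).card : ℝ)) /
    ((W.length : ℝ) + 1 - (V.length : ℝ))

/-- Number of substrings of W (given by position pairs) that are V-instances. -/
noncomputable def instSubCount {Γ β : Type*} (V : List Γ) (W : List β) : ℕ :=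
  Nat.card {p : ℕ × ℕ //
    p.1 < p.2 ∧ p.2 ≤ W.length ∧ IsInstance V ((W.drop p.1).take (p.2 - p.1))}

/-- Instance density δ(V,W). -/
noncomputable def instDensity {Γ β : Type*} (V : List Γ) (W : List β) : ℝ :=
  (instSubCount V W : ℝ) / ((W.length + 1).choose 2 : ℝ)

/-- q-liminf density of V. -/
noncomputable def liminfDensity {Γ : Type*} (V : List Γ) (q : ℕ) : ℝ :=
  Filter.liminf (fun W : List (Fin q) => instDensity V W) (Filter.comap List.length Filter.atTop)

/-- Expected instance density of V in a uniformly random q-ary word of length n. -/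
noncomputable def expDensity {Γ : Type*} (V : List Γ) (q n : ℕ) : ℝ :=
  (∑ W : Fin n → Fin q, instDensity V (List.ofFn W)) / (q : ℝ) ^ n

/-- Variance of the instance density of V in a uniformly random q-ary word of length n. -/
noncomputable def varDensity {Γ : Type*} (V : List Γ) (q n : ℕ) : ℝ :=
  (∑ W : Fin n → Fin q, (instDensity V (List.ofFn W) - expDensity V q n) ^ 2) / (q : ℝ) ^ n

/-- Probability that a uniformly random q-ary word of length n is a V-instance. -/
noncomputable def instProb {Γ : Type*} (V : List Γ) (q n : ℕ) : ℝ :=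
  (Nat.card {W : Fin n → Fin q // IsInstance V (List.ofFn W)} : ℝ) / (q : ℝ) ^ n

/-- V is doubled: every letter occurring in V occurs at least twice. -/
def Doubled {Γ : Type*} [DecidableEq Γ] (V : List Γ) : Prop :=
  ∀ x ∈ V, 2 ≤ V.count x

/-- Number of letter recurrences ‖V‖ = |V| - |L(V)|. -/
def recurCount {Γ : Type*} [DecidableEq Γ] (V : List Γ) : ℕ :=
  V.length - V.dedup.length

/-!
An instance of `Z (n+1)` is `A ++ B ++ A` with `A` an instance of `Z n`, and instances of `Z n`
have length at least `2 ^ n - 1`. Summing over the length of `A` gives, uniformly in `L`, that a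
proportion at most `(q/(q-1))^(n-1) * q^(-(2^n-n-1))` of the `q`-ary words of length `L` are
instances of `Z n`. A word of length `M` has `M(M+1)/2` nonempty factors, so by the union bound
some word of length `M` avoids `Z n` as soon as `(M+1)^2` times that proportion is at most `2`.
The lower bound on `f(n,q)` also needs `f(n,q)` to be attained, i.e. that `Z n` is unavoidable
(Zimin): among `q^N + 1` disjoint blocks of length `N` two coincide, and if `N` forces `Z n` then
`C ++ E ++ C` with `E` nonempty forces `Z (n+1)`.
-/

open Finset

theorem lt_of_mem_zimin {n x : ℕ} (h : x ∈ Zimin n) : x < n := by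
  induction n with
  | zero => simp [Zimin] at h
  | succ m ih =>
    simp only [Zimin, List.mem_append, List.mem_singleton] at h
    rcases h with (h | rfl) | h <;> grind

theorem zimin_ne_nil {n : ℕ} (hn : 1 ≤ n) : Zimin n ≠ [] := by
  obtain ⟨m, rfl⟩ := Nat.exists_eq_add_of_le' hn
  simp [Zimin]

theorem IsInstance.ne_nil {Γ β : Type*} {V : List Γ} {U : List β} (hV : V ≠ [])
    (h : IsInstance V U) : U ≠ [] := by
  obtain ⟨φ, hφ, rfl⟩ := h
  obtain ⟨x, hx⟩ := List.exists_mem_of_ne_nil V hV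
  simp only [ne_eq, List.flatten_eq_nil_iff, List.mem_map, forall_exists_index, and_imp,
    forall_apply_eq_imp_iff₂, not_forall]
  exact ⟨x, hx, hφ x hx⟩

theorem isInstance_zimin_succ_iff {β : Type*} {n : ℕ} {U : List β} :
    IsInstance (Zimin (n + 1)) U ↔
      ∃ A B : List β, IsInstance (Zimin n) A ∧ B ≠ [] ∧ U = A ++ B ++ A := by
  constructor
  · rintro ⟨φ, hφ, rfl⟩
    exact ⟨((Zimin n).map φ).flatten, φ n,
      ⟨φ, fun x hx => hφ x (by simp [Zimin, hx]), rfl⟩, hφ n (by simp [Zimin]),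
      by simp [Zimin]⟩
  · rintro ⟨A, B, ⟨ψ, hψ, rfl⟩, hB, rfl⟩
    have hψ' : ((Zimin n).map fun x => if x = n then B else ψ x) = (Zimin n).map ψ :=
      List.map_congr_left fun x hx => if_neg (lt_of_mem_zimin hx).ne
    refine ⟨fun x => if x = n then B else ψ x, fun x hx => ?_, by simp [Zimin, hψ']⟩
    simp only [Zimin, List.mem_append, List.mem_singleton] at hx
    dsimp only
    split_ifs with hxn
    · exact hB
    · rcases hx with (hx | hx) | hx
      exacts [hψ x hx, absurd hx hxn, hψ x hx]

theorem IsInstance.two_pow_le_length_zimin {β : Type*} {n : ℕ} {U : List β}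
    (h : IsInstance (Zimin n) U) : 2 ^ n ≤ U.length + 1 := by
  induction n generalizing U with
  | zero => simp
  | succ m ih =>
    obtain ⟨A, B, hA, hB, rfl⟩ := isInstance_zimin_succ_iff.mp h
    have := ih hA
    have := List.length_pos_iff.mpr hB
    simp only [List.length_append, pow_succ]
    omega

theorem encounters_zimin_succ_of_infix {β : Type*} {n : ℕ} {C E W : List β}
    (hC : Encounters (Zimin n) C) (hE : E ≠ []) (h : C ++ E ++ C <:+: W) :
    Encounters (Zimin (n + 1)) W := by
  obtain ⟨U, ⟨x, y, rfl⟩, hU⟩ := hC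
  refine ⟨U ++ (y ++ E ++ x) ++ U, List.IsInfix.trans ⟨x, y, by simp⟩ h,
    isInstance_zimin_succ_iff.mpr ⟨U, _, hU, by simp [hE], rfl⟩⟩

theorem exists_ne_nil_infix_of_take_drop_eq {β : Type*} {W : List β} {N p p' : ℕ}
    (hp : p + N < p') (hW : p' + N ≤ W.length)
    (h : (W.drop p').take N = (W.drop p).take N) :
    ∃ E ≠ [], (W.drop p).take N ++ E ++ (W.drop p).take N <:+: W := by
  refine ⟨((W.drop p).drop N).take (p' - p - N), ?_, ?_⟩
  · simp only [ne_eq, List.take_eq_nil_iff, List.drop_drop, List.drop_eq_nil_iff]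
    omega
  · have hsplit : (W.drop p).take (N + (p' - p - N) + N) =
        (W.drop p).take N ++ ((W.drop p).drop N).take (p' - p - N) ++ (W.drop p).take N := by
      rw [List.take_add, List.take_add, List.drop_drop, List.drop_drop, ← h,
        show p + (N + (p' - p - N)) = p' by omega, List.append_assoc]
    rw [← hsplit]
    exact (List.take_prefix _ _).isInfix.trans (List.drop_suffix _ _).isInfix

def words (α : Type*) [Fintype α] (L : ℕ) : Finset (List α) :=
  (univ : Finset (Fin L → α)).map ⟨List.ofFn, List.ofFn_injective⟩

theorem mem_words {α : Type*} [Fintype α] {L : ℕ} {W : List α} :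
    W ∈ words α L ↔ W.length = L := by
  refine ⟨fun h => ?_, fun h => ?_⟩
  · obtain ⟨f, -, rfl⟩ := Finset.mem_map.mp h
    exact List.length_ofFn
  · subst h
    exact Finset.mem_map.mpr ⟨fun i => W[i], mem_univ _, List.ofFn_getElem⟩

theorem card_words (α : Type*) [Fintype α] (L : ℕ) : #(words α L) = Fintype.card α ^ L := by
  simp [words]

theorem exists_forall_encounters_zimin (α : Type*) [Fintype α] (n : ℕ) :
    ∃ N, ∀ W : List α, N ≤ W.length → Encounters (Zimin n) W := by
  induction n with
  | zero =>
    exact ⟨0, fun W _ =>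
      ⟨[], List.nil_infix, fun _ => [], by simp [Zimin], by simp [Zimin]⟩⟩
  | succ n ih =>
    obtain ⟨N, hN⟩ := ih
    set K := Fintype.card α ^ N
    refine ⟨(K + 1) * (N + 1), fun W hW => ?_⟩
    -- two of the `K + 1` blocks of length `N` starting at the multiples of `N + 1` coincide
    have hblock : ∀ i ≤ K, i * (N + 1) + N < W.length := fun i hi => by nlinarith
    have hmaps : Set.MapsTo (fun i => (W.drop (i * (N + 1))).take N) (range (K + 1)) (words α N) :=
      fun i hi => by
        have := hblock i (Nat.lt_succ_iff.mp (mem_range.mp hi))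
        simp only [mem_coe, mem_words, List.length_take, List.length_drop]
        omega
    obtain ⟨i, hi, j, hj, hij, heq⟩ := exists_ne_map_eq_of_card_lt_of_maps_to
      (by simp [card_words, K]) hmaps
    have key : ∀ i j, i < j → j ≤ K →
        (W.drop (j * (N + 1))).take N = (W.drop (i * (N + 1))).take N →
        Encounters (Zimin (n + 1)) W := fun i j hij hj h => by
      have hp : i * (N + 1) + N < j * (N + 1) := by nlinarith
      obtain ⟨E, hE, hinfix⟩ := exists_ne_nil_infix_of_take_drop_eq hp (hblock j hj).le h
      refine encounters_zimin_succ_of_infix (hN _ ?_) hE hinfix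
      have := hblock i (hij.le.trans hj)
      simp only [List.length_take, List.length_drop]
      omega
    rcases hij.lt_or_gt with h | h
    · exact key i j h (Nat.lt_succ_iff.mp (mem_range.mp hj)) heq.symm
    · exact key j i h (Nat.lt_succ_iff.mp (mem_range.mp hi)) heq

theorem one_sub_inv_inv_pow_le_exp {q : ℝ} (hq : 1 < q) (k : ℕ) :
    (1 - q⁻¹)⁻¹ ^ k ≤ Real.exp (k / (q - 1)) := by
  have hbase : (1 - q⁻¹)⁻¹ = 1 / (q - 1) + 1 := by
    have : q - 1 ≠ 0 := by linarith
    field_simp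
    ring
  calc (1 - q⁻¹)⁻¹ ^ k ≤ Real.exp (1 / (q - 1)) ^ k := by
        rw [hbase]
        exact pow_le_pow_left₀ (by positivity) (Real.add_one_le_exp _) k
    _ = Real.exp (k / (q - 1)) := by rw [← Real.exp_nat_mul, mul_one_div]

section Counting

variable {α : Type*} [Fintype α]

variable (α) in
open Classical in
noncomputable def instanceWords {Γ : Type*} (V : List Γ) (L : ℕ) : Finset (List α) :=
  {U ∈ words α L | IsInstance V U}

variable (α) in
open Classical in
noncomputable def encounteringWords {Γ : Type*} (V : List Γ) (M : ℕ) : Finset (List α) :=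
  {W ∈ words α M | Encounters V W}

theorem mem_instanceWords {Γ : Type*} {V : List Γ} {L : ℕ} {U : List α} :
    U ∈ instanceWords α V L ↔ U.length = L ∧ IsInstance V U := by
  simp [instanceWords, mem_words]

theorem card_instanceWords_le {Γ : Type*} (V : List Γ) (L : ℕ) :
    #(instanceWords α V L) ≤ Fintype.card α ^ L := by
  classical
  exact card_words α L ▸ card_le_card (filter_subset _ _)

theorem card_instanceWords_zimin_succ_le (n L : ℕ) :
    #(instanceWords α (Zimin (n + 1)) L) ≤
      ∑ a ∈ range L with 2 * a < L,
        #(instanceWords α (Zimin n) a) * Fintype.card α ^ (L - 2 * a) := by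
  classical
  calc #(instanceWords α (Zimin (n + 1)) L)
      ≤ #({a ∈ range L | 2 * a < L}.biUnion fun a =>
          (instanceWords α (Zimin n) a ×ˢ words α (L - 2 * a)).image
            fun p => p.1 ++ p.2 ++ p.1) := by
        refine card_le_card fun U hU => ?_
        obtain ⟨hlen, hU⟩ := mem_instanceWords.mp hU
        obtain ⟨A, B, hA, hB, rfl⟩ := isInstance_zimin_succ_iff.mp hU
        have := List.length_pos_iff.mpr hB
        simp only [List.length_append] at hlen
        simp only [mem_biUnion, mem_filter, mem_range, mem_image, mem_product, mem_instanceWords,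
          mem_words, Prod.exists]
        exact ⟨A.length, ⟨by omega, by omega⟩, A, B, ⟨⟨rfl, hA⟩, by omega⟩, rfl⟩
    _ ≤ ∑ a ∈ range L with 2 * a < L,
          #(instanceWords α (Zimin n) a ×ˢ words α (L - 2 * a)) :=
        card_biUnion_le.trans (sum_le_sum fun _ _ => card_image_le)
    _ = _ := by simp only [card_product, card_words]

theorem card_encounteringWords_le {Γ : Type*} (V : List Γ) (M : ℕ) :
    #(encounteringWords α V M) ≤
      ∑ a ∈ range (M + 1), ∑ ℓ ∈ range (M + 1 - a),
        Fintype.card α ^ (M - ℓ) * #(instanceWords α V ℓ) := by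
  classical
  calc #(encounteringWords α V M)
      ≤ #((range (M + 1)).biUnion fun a => (range (M + 1 - a)).biUnion fun ℓ =>
          (words α a ×ˢ instanceWords α V ℓ ×ˢ words α (M - a - ℓ)).image
            fun p => p.1 ++ p.2.1 ++ p.2.2) := by
        refine card_le_card fun W hW => ?_
        simp only [encounteringWords, mem_filter, mem_words] at hW
        obtain ⟨hlen, U, ⟨s, t, rfl⟩, hU⟩ := hW
        simp only [List.length_append] at hlen
        simp only [mem_biUnion, mem_range, mem_image, mem_product, mem_instanceWords,
          mem_words, Prod.exists]
        exact ⟨s.length, by omega, U.length, by omega, s, U, t,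
          ⟨rfl, ⟨rfl, hU⟩, by omega⟩, rfl⟩
    _ ≤ ∑ a ∈ range (M + 1), ∑ ℓ ∈ range (M + 1 - a),
          #(words α a ×ˢ instanceWords α V ℓ ×ˢ words α (M - a - ℓ)) :=
        card_biUnion_le.trans <| sum_le_sum fun _ _ =>
          card_biUnion_le.trans <| sum_le_sum fun _ _ => card_image_le
    _ = _ := by
        refine sum_congr rfl fun a ha => sum_congr rfl fun ℓ hℓ => ?_
        simp only [mem_range] at ha hℓ
        rw [card_product, card_product, card_words, card_words, mul_left_comm, ← pow_add,
          show a + (M - a - ℓ) = M - ℓ by omega, mul_comm]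

theorem instanceWords_zero_of_ne_nil {Γ : Type*} {V : List Γ} (hV : V ≠ []) :
    instanceWords α V 0 = ∅ :=
  eq_empty_of_forall_notMem fun U hU => by
    obtain ⟨hlen, hU⟩ := mem_instanceWords.mp hU
    exact hU.ne_nil hV (List.length_eq_zero_iff.mp hlen)

theorem card_instanceWords_zimin_eq_zero {n a : ℕ} (ha : a + 1 < 2 ^ n) :
    #(instanceWords α (Zimin n) a) = 0 :=
  card_eq_zero.mpr <| eq_empty_of_forall_notMem fun U hU => by
    obtain ⟨rfl, hinst⟩ := mem_instanceWords.mp hU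
    exact absurd hinst.two_pow_le_length_zimin (by omega)

theorem card_instanceWords_zimin_le (hq : 1 < Fintype.card α) {n : ℕ} (hn : 1 ≤ n) (L : ℕ) :
    (#(instanceWords α (Zimin n) L) : ℝ) ≤
      (1 - (Fintype.card α : ℝ)⁻¹)⁻¹ ^ (n - 1) *
        (Fintype.card α : ℝ)⁻¹ ^ (2 ^ n - n - 1) * (Fintype.card α : ℝ) ^ L := by
  set q : ℝ := (Fintype.card α : ℝ) with hq_def
  have hq1 : 1 < q := by rw [hq_def]; exact_mod_cast hq
  induction n, hn using Nat.le_induction generalizing L with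
  | base =>
    simpa [hq_def] using
      (Nat.cast_le (α := ℝ)).mpr (card_instanceWords_le (α := α) (Zimin 1) L)
  | succ n hn ih =>
    set r := q⁻¹
    set c := (1 - r)⁻¹ ^ (n - 1)
    set D := 2 ^ n - n - 1
    set m := 2 ^ n - 1
    have hr0 : 0 ≤ r := by positivity
    have hr1 : r < 1 := inv_lt_one_of_one_lt₀ hq1
    have hterm : ∀ a, 2 * a < L →
        (#(instanceWords α (Zimin n) a) : ℝ) * q ^ (L - 2 * a) ≤
          c * r ^ D * q ^ L * r ^ a := by
      intro a ha
      have hpow : q ^ L * r ^ a = q ^ a * q ^ (L - 2 * a) := by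
        conv_lhs => rw [show L = a + (L - 2 * a) + a by omega, pow_add, mul_assoc, ← mul_pow,
          mul_inv_cancel₀ (by positivity), one_pow, mul_one, pow_add]
      rw [mul_assoc _ (q ^ L), hpow, ← mul_assoc]
      exact mul_le_mul_of_nonneg_right (ih a) (by positivity)
    calc (#(instanceWords α (Zimin (n + 1)) L) : ℝ)
        ≤ ∑ a ∈ range L with 2 * a < L,
            (#(instanceWords α (Zimin n) a) : ℝ) * q ^ (L - 2 * a) := by
          rw [hq_def]
          exact_mod_cast card_instanceWords_zimin_succ_le n L
      _ = ∑ a ∈ range L with 2 * a < L ∧ m ≤ a,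
            (#(instanceWords α (Zimin n) a) : ℝ) * q ^ (L - 2 * a) := by
          rw [← filter_filter]
          refine (sum_filter_of_ne fun a _ h => not_lt.mp fun ha => h ?_).symm
          rw [card_instanceWords_zimin_eq_zero (by omega), Nat.cast_zero, zero_mul]
      _ ≤ ∑ a ∈ range L with 2 * a < L ∧ m ≤ a, c * r ^ D * q ^ L * r ^ a :=
          sum_le_sum fun a ha => hterm a (mem_filter.mp ha).2.1
      _ ≤ ∑ a ∈ Ico m L, c * r ^ D * q ^ L * r ^ a := by
          refine sum_le_sum_of_subset_of_nonneg (fun a ha => ?_) fun _ _ _ => by positivity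
          simp only [mem_filter, mem_range] at ha
          exact mem_Ico.mpr ⟨ha.2.2, ha.1⟩
      _ ≤ c * r ^ D * q ^ L * (r ^ m / (1 - r)) := by
          rw [← mul_sum]
          exact mul_le_mul_of_nonneg_left (geom_sum_Ico_le_of_lt_one hr0 hr1) (by positivity)
      _ = (1 - r)⁻¹ ^ (n + 1 - 1) * r ^ (2 ^ (n + 1) - (n + 1) - 1) * q ^ L := by
          have : n ≤ 2 ^ n - 1 := Nat.le_sub_one_of_lt n.lt_two_pow_self
          rw [show n + 1 - 1 = n - 1 + 1 by omega,
            show 2 ^ (n + 1) - (n + 1) - 1 = D + m by rw [pow_succ]; omega, pow_succ, pow_add]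
          ring

theorem card_encounteringWords_le_of_card_instanceWords_le {Γ : Type*} {V : List Γ}
    (hV : V ≠ []) {β : ℝ}
    (hβ : ∀ ℓ, (#(instanceWords α V ℓ) : ℝ) ≤ β * (Fintype.card α : ℝ) ^ ℓ)
    (M : ℕ) :
    (#(encounteringWords α V M) : ℝ) ≤
      M * (M + 1) / 2 * (β * (Fintype.card α : ℝ) ^ M) := by
  set q : ℝ := (Fintype.card α : ℝ) with hq_def
  have hrow : ∀ a ∈ range (M + 1),
      ∑ ℓ ∈ range (M + 1 - a), q ^ (M - ℓ) * (#(instanceWords α V ℓ) : ℝ) ≤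
        ((M - a : ℕ) : ℝ) * (β * q ^ M) := by
    intro a ha
    rw [show M + 1 - a = M - a + 1 by simp at ha; omega, sum_range_succ',
      instanceWords_zero_of_ne_nil hV, card_empty, Nat.cast_zero, mul_zero, add_zero]
    refine (sum_le_card_nsmul _ _ (β * q ^ M) fun ℓ hℓ => ?_).trans_eq
      (by rw [card_range, nsmul_eq_mul])
    have hℓ : ℓ + 1 ≤ M := by simp at hℓ; omega
    calc q ^ (M - (ℓ + 1)) * (#(instanceWords α V (ℓ + 1)) : ℝ)
        ≤ q ^ (M - (ℓ + 1)) * (β * q ^ (ℓ + 1)) :=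
          mul_le_mul_of_nonneg_left (hβ _) (by positivity)
      _ = β * q ^ M := by rw [mul_left_comm, ← pow_add, Nat.sub_add_cancel hℓ]
  have hgauss : (∑ a ∈ range (M + 1), ((M - a : ℕ) : ℝ)) = M * (M + 1) / 2 := by
    have h : (∑ a ∈ range (M + 1), (M - a)) * 2 = (M + 1) * M := by
      have := sum_range_reflect (fun a => a) (M + 1)
      simp only [add_tsub_cancel_right] at this
      rw [this, sum_range_id_mul_two, add_tsub_cancel_right]
    rw [← Nat.cast_sum, eq_div_iff two_ne_zero, mul_comm (M : ℝ)]
    exact_mod_cast h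
  calc (#(encounteringWords α V M) : ℝ)
      ≤ ∑ a ∈ range (M + 1), ∑ ℓ ∈ range (M + 1 - a),
          q ^ (M - ℓ) * (#(instanceWords α V ℓ) : ℝ) := by
        rw [hq_def]
        exact_mod_cast card_encounteringWords_le V M
    _ ≤ ∑ a ∈ range (M + 1), ((M - a : ℕ) : ℝ) * (β * q ^ M) := sum_le_sum hrow
    _ = M * (M + 1) / 2 * (β * q ^ M) := by rw [← sum_mul, hgauss]

end Counting

theorem exists_length_eq_not_encounters_zimin {α : Type*} [Fintype α] (hq : 1 < Fintype.card α)
    {n : ℕ} (hn : 1 ≤ n) {M : ℕ}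
    (hM : ((M : ℝ) + 1) ^ 2 ≤ 2 * (Fintype.card α : ℝ) ^ (2 ^ n - n - 1) *
      Real.exp (-(((n : ℝ) - 1) / ((Fintype.card α : ℝ) - 1)))) :
    ∃ W : List α, W.length = M ∧ ¬ Encounters (Zimin n) W := by
  by_contra! hall
  set q : ℝ := (Fintype.card α : ℝ) with hq_def
  set c' := ((n : ℝ) - 1) / (q - 1)
  set D := 2 ^ n - n - 1
  set β := (1 - q⁻¹)⁻¹ ^ (n - 1) * q⁻¹ ^ D
  have hq1 : 1 < q := by rw [hq_def]; exact_mod_cast hq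
  have hβ0 : 0 < β := by
    have : 0 < 1 - q⁻¹ := sub_pos.mpr (inv_lt_one_of_one_lt₀ hq1)
    positivity
  have hall_words : q ^ M ≤ (#(encounteringWords α (Zimin n) M) : ℝ) := by
    classical
    rw [hq_def, ← Nat.cast_pow, ← card_words, Nat.cast_le]
    exact card_le_card fun W hW => mem_filter.mpr ⟨hW, hall W (mem_words.mp hW)⟩
  have hcount : (#(encounteringWords α (Zimin n) M) : ℝ) ≤ M * (M + 1) / 2 * (β * q ^ M) :=
    card_encounteringWords_le_of_card_instanceWords_le (zimin_ne_nil hn)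
      (card_instanceWords_zimin_le hq hn) M
  have hβ : β ≤ Real.exp c' * q⁻¹ ^ D := by
    refine mul_le_mul_of_nonneg_right ?_ (by positivity)
    simpa [c', Nat.cast_sub hn] using one_sub_inv_inv_pow_le_exp hq1 (n - 1)
  have hM' : ((M : ℝ) + 1) ^ 2 * (Real.exp c' * q⁻¹ ^ D) ≤ 2 := by
    have hq0 : q ≠ 0 := by positivity
    calc ((M : ℝ) + 1) ^ 2 * (Real.exp c' * q⁻¹ ^ D)
        ≤ 2 * q ^ D * Real.exp (-c') * (Real.exp c' * q⁻¹ ^ D) :=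
          mul_le_mul_of_nonneg_right hM (by positivity)
      _ = 2 := by rw [Real.exp_neg, inv_pow]; field_simp
  have hpairs : 2 ≤ M * (M + 1) * β := by
    have h := hall_words.trans hcount
    rw [← mul_assoc, le_mul_iff_one_le_left (by positivity)] at h
    linarith
  nlinarith [mul_le_mul_of_nonneg_left hβ (by positivity : (0 : ℝ) ≤ ((M : ℝ) + 1) ^ 2),
    mul_pos (by positivity : (0 : ℝ) < M + 1) hβ0]

theorem stmt3 (n q : ℕ) (hn : 1 ≤ n) (hq : 2 ≤ q) :
    (∀ M : ℕ, 1 ≤ M →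
      ((M : ℝ) + 1) ^ 2 ≤
          2 * (q : ℝ) ^ (2 ^ n - n - 1) * Real.exp (-(((n : ℝ) - 1) / ((q : ℝ) - 1))) →
      ∃ W : List (Fin q), W.length = M ∧ ¬ Encounters (Zimin n) W) ∧
    Real.sqrt (2 * (q : ℝ) ^ (2 ^ n) /
        ((q : ℝ) ^ (n + 1) * Real.exp (((n : ℝ) - 1) / ((q : ℝ) - 1)))) - 1 ≤ (fZ n q : ℝ) := by
  have hcard : 1 < Fintype.card (Fin q) := by rw [Fintype.card_fin]; omega
  have havoid : ∀ M : ℕ, ((M : ℝ) + 1) ^ 2 ≤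
      2 * (q : ℝ) ^ (2 ^ n - n - 1) * Real.exp (-(((n : ℝ) - 1) / ((q : ℝ) - 1))) →
      ∃ W : List (Fin q), W.length = M ∧ ¬ Encounters (Zimin n) W :=
    fun M hM => exists_length_eq_not_encounters_zimin hcard hn (by simpa using hM)
  refine ⟨fun M _ hM => havoid M hM, ?_⟩
  obtain ⟨N, hN⟩ := exists_forall_encounters_zimin (Fin q) n
  have hmem : fZ n q ∈ {M | ∀ W : List (Fin q), W.length = M → Encounters (Zimin n) W} :=
    Nat.sInf_mem ⟨N, fun W hW => hN W hW.ge⟩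
  have hlt : 2 * (q : ℝ) ^ (2 ^ n - n - 1) * Real.exp (-(((n : ℝ) - 1) / ((q : ℝ) - 1))) <
      ((fZ n q : ℝ) + 1) ^ 2 := by
    by_contra! h
    obtain ⟨W, hW, hW'⟩ := havoid _ h
    exact hW' (hmem W hW)
  have hsplit : (q : ℝ) ^ (2 ^ n) = (q : ℝ) ^ (2 ^ n - n - 1) * (q : ℝ) ^ (n + 1) := by
    rw [← pow_add, Nat.sub_sub, Nat.sub_add_cancel n.lt_two_pow_self]
  rw [sub_le_iff_le_add, Real.sqrt_le_left (by positivity), hsplit]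
  have : (q : ℝ) ≠ 0 := by positivity
  calc _ = 2 * (q : ℝ) ^ (2 ^ n - n - 1) * Real.exp (-(((n : ℝ) - 1) / ((q : ℝ) - 1))) := by
        rw [Real.exp_neg]
        field_simp
    _ ≤ _ := hlt.le
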